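/- arXiv:1410.2323 — 3 statements merged into one kernel-verified Lean document; each statement's English description precedes it below -/
import Mathlib

section
/- Let A be a p×p orthogonal matrix satisfying the sparsity conditions max_j Σ_i |a_{i,j}|^ι ≤ s_1 and max_i Σ_j |a_{i,j}|^ι ≤ s_2 for some ι ∈ [0,1). Let Σ_x be a p×p matrix that is block-diagonal with maximum block size S_max (so its (v,l) entry vanishes whenever |v-l| > S_max under a suitable indexing), and let Σ_y = A Σ_x A' with entries σ_{i,j}. Then max_j Σ_i |σ_{i,j}|^ι ≤ (2 S_max + 1) s_1 s_2 ‖Σ_x‖_∞^ι and max_i Σ_j |σ_{i,j}|^ι ≤ (2 S_max + 1) s_1 s_2 ‖Σ_x‖_∞^ι, where ‖M‖_∞ = max_i Σ_j |m_{i,j}|. -/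
open Matrix

private lemma rpow_add_le' {x y ι : ℝ} (hx : 0 ≤ x) (hy : 0 ≤ y) (h0 : 0 ≤ ι) (h1 : ι ≤ 1) :
    (x + y) ^ ι ≤ x ^ ι + y ^ ι := by
  lift x to NNReal using hx
  lift y to NNReal using hy
  exact_mod_cast NNReal.rpow_add_le_add_rpow x y h0 h1

private lemma abs_sum_rpow_le {α : Type*} (s : Finset α) (f : α → ℝ) {ι : ℝ} (hp : 0 < ι)
    (h1 : ι ≤ 1) : |∑ x ∈ s, f x| ^ ι ≤ ∑ x ∈ s, |f x| ^ ι := by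
  classical
  induction s using Finset.induction with
  | empty => simp [Real.zero_rpow hp.ne']
  | @insert a s ha ih =>
    rw [Finset.sum_insert ha, Finset.sum_insert ha]
    calc |f a + ∑ x ∈ s, f x| ^ ι ≤ (|f a| + |∑ x ∈ s, f x|) ^ ι := by
          exact Real.rpow_le_rpow (abs_nonneg _) (abs_add_le _ _) hp.le
      _ ≤ |f a| ^ ι + |∑ x ∈ s, f x| ^ ι :=
          rpow_add_le' (abs_nonneg _) (abs_nonneg _) hp.le h1
      _ ≤ |f a| ^ ι + ∑ x ∈ s, |f x| ^ ι := by linarith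

private lemma key_bound {p : ℕ} (A Sx : Matrix (Fin p) (Fin p) ℝ)
    (ι : ℝ) (hι0 : 0 ≤ ι) (hι1 : ι < 1) (s₁ s₂ : ℝ)
    (hcol : ∀ j, ∑ i, |A i j| ^ ι ≤ s₁)
    (hrow : ∀ i, ∑ j, |A i j| ^ ι ≤ s₂)
    (Smax : ℕ)
    (hband : ∀ v l : Fin p, (Smax : ℤ) < |(v : ℤ) - (l : ℤ)| → Sx v l = 0)
    (M : ℝ) (hM0 : 0 ≤ M) (hM : ∀ v l, |Sx v l| ≤ M) (j : Fin p) :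
    ∑ i, |(A * Sx * Aᵀ) i j| ^ ι ≤ (2 * (Smax : ℝ) + 1) * s₁ * s₂ * M ^ ι := by
  classical
  rcases hι0.eq_or_lt with h0 | h0
  · -- ι = 0
    subst h0
    simp only [Real.rpow_zero] at *
    have h1 : ∑ i : Fin p, (1:ℝ) = (p : ℝ) := by simp
    rw [h1]
    have hs1 : (p : ℝ) ≤ s₁ := by
      have := hcol j; rwa [h1] at this
    have hs2 : (p : ℝ) ≤ s₂ := by
      have := hrow j; rwa [h1] at this
    have hp1 : (1:ℝ) ≤ (p : ℝ) := by
      have : 0 < p := Fin.pos j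
      exact_mod_cast this
    have hsm : (0:ℝ) ≤ (Smax : ℝ) := Nat.cast_nonneg _
    have hpp : (p:ℝ) * (p:ℝ) ≤ s₁ * s₂ :=
      mul_le_mul hs1 hs2 (by positivity) (by linarith)
    nlinarith [hpp]
  · -- 0 < ι
    have hι1' : ι ≤ 1 := hι1.le
    have hT0 : ∀ q : Fin p × Fin p, 0 ≤ |Sx q.1 q.2| ^ ι * |A j q.2| ^ ι :=
      fun q => mul_nonneg (Real.rpow_nonneg (abs_nonneg _) ι)
        (Real.rpow_nonneg (abs_nonneg _) ι)
    have hs1nn : 0 ≤ s₁ := le_trans (Finset.sum_nonneg fun i _ =>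
      Real.rpow_nonneg (abs_nonneg _) ι) (hcol j)
    -- band bound on column sums of |Sx|^ι
    have hbandsum : ∀ l : Fin p, ∑ v, |Sx v l| ^ ι ≤ (2 * (Smax : ℝ) + 1) * M ^ ι := by
      intro l
      have hfil : ∑ v, |Sx v l| ^ ι
          = ∑ v ∈ Finset.univ.filter (fun v : Fin p => |(v : ℤ) - (l : ℤ)| ≤ Smax),
              |Sx v l| ^ ι := by
        refine (Finset.sum_filter_of_ne ?_).symm
        intro v _ hne
        by_contra hc
        push_neg at hc
        exact hne (by rw [hband v l hc]; simp [Real.zero_rpow h0.ne'])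
      have hcard : ((Finset.univ.filter
          (fun v : Fin p => |(v : ℤ) - (l : ℤ)| ≤ Smax)).card : ℝ)
          ≤ 2 * (Smax : ℝ) + 1 := by
        have hinj : (Finset.univ.filter
            (fun v : Fin p => |(v : ℤ) - (l : ℤ)| ≤ Smax)).card
            ≤ (Finset.Icc ((l : ℤ) - Smax) ((l : ℤ) + Smax)).card := by
          have himg : ((Finset.univ.filter
              (fun v : Fin p => |(v : ℤ) - (l : ℤ)| ≤ Smax)).image
              (fun v : Fin p => (v : ℤ))).card
              = (Finset.univ.filter
              (fun v : Fin p => |(v : ℤ) - (l : ℤ)| ≤ Smax)).card := by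
            apply Finset.card_image_of_injOn
            intro a _ b _ hab
            simp only at hab
            exact Fin.ext (by exact_mod_cast hab)
          rw [← himg]
          apply Finset.card_le_card
          intro x hx
          simp only [Finset.mem_image, Finset.mem_filter] at hx
          obtain ⟨v, ⟨_, hv⟩, rfl⟩ := hx
          rw [Finset.mem_Icc]
          rw [abs_le] at hv
          omega
        have hIcc : (Finset.Icc ((l : ℤ) - Smax) ((l : ℤ) + Smax)).card
            = 2 * Smax + 1 := by
          rw [Int.card_Icc]
          omega
        rw [hIcc] at hinj
        calc ((Finset.univ.filter
            (fun v : Fin p => |(v : ℤ) - (l : ℤ)| ≤ Smax)).card : ℝ)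
            ≤ ((2 * Smax + 1 : ℕ) : ℝ) := by exact_mod_cast hinj
          _ = 2 * (Smax : ℝ) + 1 := by push_cast; ring
      rw [hfil]
      calc ∑ v ∈ Finset.univ.filter (fun v : Fin p => |(v : ℤ) - (l : ℤ)| ≤ Smax),
              |Sx v l| ^ ι
          ≤ (Finset.univ.filter
              (fun v : Fin p => |(v : ℤ) - (l : ℤ)| ≤ Smax)).card • (M ^ ι) := by
            apply Finset.sum_le_card_nsmul
            intro v _
            exact Real.rpow_le_rpow (abs_nonneg _) (hM v l) hι0
        _ = ((Finset.univ.filter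
              (fun v : Fin p => |(v : ℤ) - (l : ℤ)| ≤ Smax)).card : ℝ) * M ^ ι := by
            rw [nsmul_eq_mul]
        _ ≤ (2 * (Smax : ℝ) + 1) * M ^ ι :=
            mul_le_mul_of_nonneg_right hcard (Real.rpow_nonneg hM0 ι)
    calc ∑ i, |(A * Sx * Aᵀ) i j| ^ ι
        ≤ ∑ i, ∑ q : Fin p × Fin p,
            |A i q.1| ^ ι * (|Sx q.1 q.2| ^ ι * |A j q.2| ^ ι) := by
          apply Finset.sum_le_sum
          intro i _
          have hentry : (A * Sx * Aᵀ) i j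
              = ∑ q : Fin p × Fin p, A i q.1 * Sx q.1 q.2 * A j q.2 := by
            rw [Matrix.mul_apply]
            rw [Fintype.sum_prod_type]
            rw [Finset.sum_comm]
            apply Finset.sum_congr rfl
            intro l _
            rw [Matrix.mul_apply, Finset.sum_mul]
            simp [Matrix.transpose_apply]
          rw [hentry]
          refine le_trans (abs_sum_rpow_le _ _ h0 hι1') ?_
          apply Finset.sum_le_sum
          intro q _
          rw [abs_mul, abs_mul,
            Real.mul_rpow (mul_nonneg (abs_nonneg _) (abs_nonneg _)) (abs_nonneg _),
            Real.mul_rpow (abs_nonneg _) (abs_nonneg _), mul_assoc]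
      _ = ∑ q : Fin p × Fin p, (∑ i, |A i q.1| ^ ι) * (|Sx q.1 q.2| ^ ι * |A j q.2| ^ ι) := by
          rw [Finset.sum_comm]
          simp [Finset.sum_mul]
      _ ≤ ∑ q : Fin p × Fin p, s₁ * (|Sx q.1 q.2| ^ ι * |A j q.2| ^ ι) := by
          apply Finset.sum_le_sum
          intro q _
          exact mul_le_mul_of_nonneg_right (hcol q.1) (hT0 q)
      _ = s₁ * ∑ q : Fin p × Fin p, |Sx q.1 q.2| ^ ι * |A j q.2| ^ ι := by
          rw [Finset.mul_sum]
      _ ≤ s₁ * ((2 * (Smax : ℝ) + 1) * M ^ ι * s₂) := by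
          apply mul_le_mul_of_nonneg_left ?_ hs1nn
          calc ∑ q : Fin p × Fin p, |Sx q.1 q.2| ^ ι * |A j q.2| ^ ι
              = ∑ l, (∑ v, |Sx v l| ^ ι) * |A j l| ^ ι := by
                rw [Fintype.sum_prod_type_right]
                apply Finset.sum_congr rfl
                intro l _
                rw [Finset.sum_mul]
            _ ≤ ∑ l, ((2 * (Smax : ℝ) + 1) * M ^ ι) * |A j l| ^ ι := by
                apply Finset.sum_le_sum
                intro l _
                exact mul_le_mul_of_nonneg_right (hbandsum l)
                  (Real.rpow_nonneg (abs_nonneg _) ι)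
            _ = ((2 * (Smax : ℝ) + 1) * M ^ ι) * ∑ l, |A j l| ^ ι := by
                rw [Finset.mul_sum]
            _ ≤ ((2 * (Smax : ℝ) + 1) * M ^ ι) * s₂ := by
                apply mul_le_mul_of_nonneg_left (hrow j)
                exact mul_nonneg (by positivity) (Real.rpow_nonneg hM0 ι)
      _ = (2 * (Smax : ℝ) + 1) * s₁ * s₂ * M ^ ι := by ring

/-- The maximum absolute row sum norm `‖M‖_∞`. -/
noncomputable def maxRowSum {m n : Type*} [Fintype n] (M : Matrix m n ℝ) : ℝ :=
  ⨆ i, ∑ j, |M i j|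

/-- Sparsity of `Σ_y = A Σ_x Aᵀ` inherited from the sparsity of the
orthogonal matrix `A` and the banded (block-diagonal, max block size `S_max`)
structure of `Σ_x`. -/
theorem sparsity_of_conjugated_banded_matrix
    {p : ℕ} (A Sx : Matrix (Fin p) (Fin p) ℝ) (hA : A * Aᵀ = 1)
    (ι : ℝ) (hι0 : 0 ≤ ι) (hι1 : ι < 1) (s₁ s₂ : ℝ)
    (hcol : ∀ j, ∑ i, |A i j| ^ ι ≤ s₁)
    (hrow : ∀ i, ∑ j, |A i j| ^ ι ≤ s₂)
    (Smax : ℕ)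
    (hband : ∀ v l : Fin p, (Smax : ℤ) < |(v : ℤ) - (l : ℤ)| → Sx v l = 0) :
    (∀ j, ∑ i, |(A * Sx * Aᵀ) i j| ^ ι ≤
        (2 * (Smax : ℝ) + 1) * s₁ * s₂ * maxRowSum Sx ^ ι) ∧
    (∀ i, ∑ j, |(A * Sx * Aᵀ) i j| ^ ι ≤
        (2 * (Smax : ℝ) + 1) * s₁ * s₂ * maxRowSum Sx ^ ι) := by
  have hMrow : ∀ v : Fin p, ∑ c, |Sx v c| ≤ maxRowSum Sx := fun v => by
    unfold maxRowSum
    exact le_ciSup (f := fun i : Fin p => ∑ c, |Sx i c|) (Set.Finite.bddAbove (Set.finite_range _)) v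
  have hM : ∀ v l : Fin p, |Sx v l| ≤ maxRowSum Sx := fun v l =>
    le_trans (Finset.single_le_sum (f := fun c => |Sx v c|)
      (fun c _ => abs_nonneg _) (Finset.mem_univ l)) (hMrow v)
  constructor
  · intro j
    have hM0 : 0 ≤ maxRowSum Sx :=
      le_trans (Finset.sum_nonneg fun c _ => abs_nonneg _) (hMrow j)
    exact key_bound A Sx ι hι0 hι1 s₁ s₂ hcol hrow Smax hband _ hM0 hM j
  · intro i
    have hM0 : 0 ≤ maxRowSum Sx :=
      le_trans (Finset.sum_nonneg fun c _ => abs_nonneg _) (hMrow i)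
    have ht : A * Sxᵀ * Aᵀ = (A * Sx * Aᵀ)ᵀ := by
      rw [Matrix.transpose_mul, Matrix.transpose_mul, Matrix.transpose_transpose,
        Matrix.mul_assoc]
    have heq : ∑ j, |(A * Sx * Aᵀ) i j| ^ ι = ∑ j, |(A * Sxᵀ * Aᵀ) j i| ^ ι := by
      rw [ht]
      simp [Matrix.transpose_apply]
    rw [heq]
    exact key_bound A Sxᵀ ι hι0 hι1 s₁ s₂ hcol hrow Smax
      (fun v l h => hband l v (by rwa [abs_sub_comm] at h))
      _ hM0 (fun v l => hM l v) i
end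

section
/- Let Σ be a p×p real matrix with entries σ_{i,j} satisfying max_i Σ_j |σ_{i,j}|^ι ≤ s and max_j Σ_i |σ_{i,j}|^ι ≤ s for some ι ∈ [0,1) and s > 0. For a threshold u > 0 define T_u(Σ) by zeroing out all entries with |σ_{i,j}| < u. Then the spectral norm of the thresholding error satisfies ‖T_u(Σ) - Σ‖_2 ≤ u^{1-ι} s. -/
open Matrix

/-- The spectral norm (largest singular value) of a real matrix. -/
noncomputable def specNorm {m n : Type*} [Fintype m] [Fintype n] [DecidableEq n]
    (M : Matrix m n ℝ) : ℝ :=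
  ‖LinearMap.toContinuousLinearMap (Matrix.toEuclideanLin M)‖

/-- Entrywise hard thresholding of a matrix at level `u`. -/
noncomputable def hardThreshold {m n : Type*} (u : ℝ) (M : Matrix m n ℝ) :
    Matrix m n ℝ :=
  Matrix.of fun i j => if u ≤ |M i j| then M i j else 0

/-- Schur test: the spectral norm is bounded by `K` whenever all row and column
absolute sums are bounded by `K`. -/
lemma specNorm_le_of_row_col {p : ℕ} (M : Matrix (Fin p) (Fin p) ℝ) (K : ℝ) (hK : 0 ≤ K)
    (hr : ∀ i, ∑ j, |M i j| ≤ K) (hc : ∀ j, ∑ i, |M i j| ≤ K) :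
    specNorm M ≤ K := by
  refine ContinuousLinearMap.opNorm_le_bound _ hK fun x => ?_
  have hx : (0:ℝ) ≤ K * ‖x‖ := mul_nonneg hK (norm_nonneg _)
  have hxsq : ‖x‖ ^ 2 = ∑ j, (x j) ^ 2 := by
    rw [EuclideanSpace.norm_eq, Real.sq_sqrt (by positivity)]
    simp [Real.norm_eq_abs, sq_abs]
  have key : ∑ i, (∑ j, M i j * x j) ^ 2 ≤ (K * ‖x‖) ^ 2 := by
    have step1 : ∀ i, (∑ j, M i j * x j) ^ 2 ≤
        (∑ j, |M i j|) * (∑ j, |M i j| * (x j) ^ 2) := by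
      intro i
      have h1 : (∑ j, M i j * x j) ^ 2 ≤ (∑ j, |M i j| * |x j|) ^ 2 := by
        rw [← sq_abs (∑ j, M i j * x j)]
        refine pow_le_pow_left₀ (abs_nonneg _) ?_ 2
        calc |∑ j, M i j * x j| ≤ ∑ j, |M i j * x j| := Finset.abs_sum_le_sum_abs _ _
          _ = ∑ j, |M i j| * |x j| := by simp [abs_mul]
      have h2 : (∑ j, |M i j| * |x j|) ^ 2 ≤
          (∑ j, (Real.sqrt |M i j|) ^ 2) * (∑ j, (Real.sqrt |M i j| * |x j|) ^ 2) := by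
        have := Finset.sum_mul_sq_le_sq_mul_sq Finset.univ
          (fun j => Real.sqrt |M i j|) (fun j => Real.sqrt |M i j| * |x j|)
        calc (∑ j, |M i j| * |x j|) ^ 2
            = (∑ j, Real.sqrt |M i j| * (Real.sqrt |M i j| * |x j|)) ^ 2 := by
              congr 1; refine Finset.sum_congr rfl fun j _ => ?_
              rw [← mul_assoc, Real.mul_self_sqrt (abs_nonneg _)]
          _ ≤ _ := this
      refine h1.trans (h2.trans (le_of_eq ?_))
      congr 1
      · refine Finset.sum_congr rfl fun j _ => Real.sq_sqrt (abs_nonneg _)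
      · refine Finset.sum_congr rfl fun j _ => ?_
        rw [mul_pow, Real.sq_sqrt (abs_nonneg _), sq_abs]
    calc ∑ i, (∑ j, M i j * x j) ^ 2
        ≤ ∑ i, (∑ j, |M i j|) * (∑ j, |M i j| * (x j) ^ 2) :=
          Finset.sum_le_sum fun i _ => step1 i
      _ ≤ ∑ i, K * (∑ j, |M i j| * (x j) ^ 2) := by
          refine Finset.sum_le_sum fun i _ => ?_
          have hpos : (0:ℝ) ≤ ∑ j, |M i j| * (x j) ^ 2 := by positivity
          exact mul_le_mul_of_nonneg_right (hr i) hpos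
      _ = K * ∑ j, (x j) ^ 2 * (∑ i, |M i j|) := by
          rw [← Finset.mul_sum, Finset.sum_comm]
          congr 1; refine Finset.sum_congr rfl fun j _ => ?_
          rw [← Finset.sum_mul]; ring
      _ ≤ K * ∑ j, (x j) ^ 2 * K := by
          refine mul_le_mul_of_nonneg_left (Finset.sum_le_sum fun j _ => ?_) hK
          exact mul_le_mul_of_nonneg_left (hc j) (sq_nonneg _)
      _ = (K * ‖x‖) ^ 2 := by
          rw [← Finset.sum_mul, ← hxsq]; ring
  calc ‖(LinearMap.toContinuousLinearMap (Matrix.toEuclideanLin M)) x‖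
      = Real.sqrt (∑ i, ‖(Matrix.toEuclideanLin M x) i‖ ^ 2) := by
        rw [LinearMap.coe_toContinuousLinearMap']; exact EuclideanSpace.norm_eq _
    _ = Real.sqrt (∑ i, (∑ j, M i j * x j) ^ 2) := by
        congr 1; refine Finset.sum_congr rfl fun i _ => ?_
        rw [Real.norm_eq_abs, sq_abs]
        simp [Matrix.toEuclideanLin_apply, Matrix.mulVec, dotProduct]
    _ ≤ Real.sqrt ((K * ‖x‖) ^ 2) := Real.sqrt_le_sqrt key
    _ = K * ‖x‖ := Real.sqrt_sq hx

/-- If both the maximum row and column sums of `|σ_{i,j}|^ι` are at most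
`s`, then the spectral norm of the thresholding error is at most `u^{1-ι} s`. -/
theorem hardThreshold_specNorm_error_bound
    {p : ℕ} (S : Matrix (Fin p) (Fin p) ℝ)
    (ι : ℝ) (hι0 : 0 ≤ ι) (hι1 : ι < 1) (s : ℝ) (hs : 0 < s)
    (hrow : ∀ i, ∑ j, |S i j| ^ ι ≤ s)
    (hcol : ∀ j, ∑ i, |S i j| ^ ι ≤ s)
    (u : ℝ) (hu : 0 < u) :
    specNorm (hardThreshold u S - S) ≤ u ^ (1 - ι) * s := by
  set D := hardThreshold u S - S with hD
  have hent : ∀ i j, |D i j| ≤ u ^ (1 - ι) * |S i j| ^ ι := by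
    intro i j
    have hru : (0:ℝ) < u ^ (1 - ι) := Real.rpow_pos_of_pos hu _
    have hDij : D i j = (if u ≤ |S i j| then S i j else 0) - S i j := rfl
    by_cases h : u ≤ |S i j|
    · rw [hDij, if_pos h, sub_self, abs_zero]
      positivity
    · rw [hDij, if_neg h, zero_sub, abs_neg]
      push_neg at h
      rcases eq_or_lt_of_le (abs_nonneg (S i j)) with h0 | h0
      · rw [← h0]; positivity
      · calc |S i j| = |S i j| ^ (1 - ι) * |S i j| ^ ι := by
              rw [← Real.rpow_add h0, sub_add_cancel, Real.rpow_one]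
          _ ≤ u ^ (1 - ι) * |S i j| ^ ι :=
              mul_le_mul_of_nonneg_right
                (Real.rpow_le_rpow (abs_nonneg _) h.le (by linarith))
                (Real.rpow_nonneg (abs_nonneg _) _)
  refine specNorm_le_of_row_col D _ (by positivity) (fun i => ?_) (fun j => ?_)
  · calc ∑ j, |D i j| ≤ ∑ j, u ^ (1 - ι) * |S i j| ^ ι :=
          Finset.sum_le_sum fun j _ => hent i j
      _ = u ^ (1 - ι) * ∑ j, |S i j| ^ ι := by rw [Finset.mul_sum]
      _ ≤ u ^ (1 - ι) * s :=
          mul_le_mul_of_nonneg_left (hrow i) (Real.rpow_nonneg hu.le _)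
  · calc ∑ i, |D i j| ≤ ∑ i, u ^ (1 - ι) * |S i j| ^ ι :=
          Finset.sum_le_sum fun i _ => hent i j
      _ = u ^ (1 - ι) * ∑ i, |S i j| ^ ι := by rw [Finset.mul_sum]
      _ ≤ u ^ (1 - ι) * s :=
          mul_le_mul_of_nonneg_left (hcol j) (Real.rpow_nonneg hu.le _)
end

section
/- With the setup above, the matrix \hat{Q}_1 = (Q_1 + Q_2 P)(I + P'P)^{-1/2} satisfies ‖\hat{Q}_1 - Q_1‖_2 ≤ 2‖P‖_2, where ‖·‖_2 is the spectral norm. -/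
/-!
Write `Q̂₁ - Q₁ = Q₂ (P S⁻¹) - Q₁ (1 - S⁻¹)`. Each bound `‖A‖ ≤ 1` comes from the Loewner
inequality `AᵀA ≤ 1`. Orthonormal columns give `‖Q₁‖, ‖Q₂‖ ≤ 1`. From `S² = 1 + PᵀP` we get
`(P S⁻¹)ᵀ (P S⁻¹) = 1 - S⁻¹ S⁻¹`, hence `‖P S⁻¹‖ ≤ 1`, and `SᵀS - 1 = PᵀP ≥ 0`, hence `‖S⁻¹‖ ≤ 1`.
Finally `(S - 1)(S + 1) = PᵀP` turns `1 - S⁻¹ = S⁻¹ (S - 1)` into `(P S⁻¹)ᵀ P (S + 1)⁻¹`, and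
`‖(S + 1)⁻¹‖ ≤ 1` because `S ≥ 0`; so both terms have norm at most `‖P‖`.
-/

open Matrix

open scoped Matrix.Norms.L2Operator

theorem specNorm_eq_l2_opNorm {m n : Type*} [Fintype m] [Fintype n] [DecidableEq n]
    (M : Matrix m n ℝ) : specNorm M = ‖M‖ :=
  rfl

theorem EuclideanSpace.real_norm_sq_eq_dotProduct {n : Type*} [Fintype n]
    (x : EuclideanSpace ℝ n) : ‖x‖ ^ 2 = x.ofLp ⬝ᵥ x.ofLp := by
  rw [← real_inner_self_eq_norm_sq, EuclideanSpace.inner_eq_star_dotProduct, star_trivial]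

namespace Matrix

variable {m n : Type*} [Fintype m] [Fintype n] [DecidableEq n]

theorem l2_opNorm_transpose [DecidableEq m] (A : Matrix m n ℝ) : ‖Aᵀ‖ = ‖A‖ := by
  rw [← conjTranspose_eq_transpose_of_trivial, l2_opNorm_conjTranspose]

theorem l2_opNorm_le_one_of_posSemidef_one_sub {A : Matrix m n ℝ}
    (h : (1 - Aᵀ * A).PosSemidef) : ‖A‖ ≤ 1 := by
  rw [l2_opNorm_def]
  refine ContinuousLinearMap.opNorm_le_bound _ zero_le_one fun x => ?_
  rw [one_mul, ← pow_le_pow_iff_left₀ (norm_nonneg _) (norm_nonneg _) two_ne_zero,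
    EuclideanSpace.real_norm_sq_eq_dotProduct, EuclideanSpace.real_norm_sq_eq_dotProduct]
  have hx := h.dotProduct_mulVec_nonneg x.ofLp
  simp only [star_trivial, sub_mulVec, one_mulVec, dotProduct_sub, ← mulVec_mulVec,
    dotProduct_mulVec _ Aᵀ, vecMul_transpose, sub_nonneg] at hx
  simpa [toLpLin_apply] using hx

theorem l2_opNorm_le_one_of_transpose_mul_self_eq_one {A : Matrix m n ℝ} (h : Aᵀ * A = 1) :
    ‖A‖ ≤ 1 :=
  l2_opNorm_le_one_of_posSemidef_one_sub (by rw [h, sub_self]; exact .zero)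

theorem l2_opNorm_inv_le_one_of_posSemidef_transpose_mul_self_sub_one {A : Matrix n n ℝ}
    (hA : IsUnit A) (h : (Aᵀ * A - 1).PosSemidef) : ‖A⁻¹‖ ≤ 1 := by
  apply l2_opNorm_le_one_of_posSemidef_one_sub
  have hAinv : A * A⁻¹ = 1 := mul_nonsing_inv A ((isUnit_iff_isUnit_det A).mp hA)
  have hconj : 1 - A⁻¹ᵀ * A⁻¹ = A⁻¹ᵀ * (Aᵀ * A - 1) * A⁻¹ := by
    rw [Matrix.mul_sub, Matrix.sub_mul, Matrix.mul_one, ← Matrix.mul_assoc, ← transpose_mul,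
      hAinv, transpose_one, Matrix.one_mul, hAinv]
  rw [hconj]
  simpa [conjTranspose_eq_transpose_of_trivial] using h.conjTranspose_mul_mul_same A⁻¹

theorem l2_opNorm_inv_add_one_le_one {S : Matrix n n ℝ} (hS : S.PosSemidef) :
    ‖(S + 1)⁻¹‖ ≤ 1 := by
  refine l2_opNorm_inv_le_one_of_posSemidef_transpose_mul_self_sub_one
    (PosDef.posSemidef_add hS PosDef.one).isUnit ?_
  have hexpand : (S + 1)ᵀ * (S + 1) - 1 = Sᴴ * S + (S + S) := by
    rw [← conjTranspose_eq_transpose_of_trivial, conjTranspose_add, conjTranspose_one,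
      hS.isHermitian.eq]
    noncomm_ring
  rw [hexpand]
  exact (posSemidef_conjTranspose_mul_self S).add (hS.add hS)

end Matrix

namespace Matrix.PosDef

theorem transpose_eq {n : Type*} {S : Matrix n n ℝ} (hS : S.PosDef) : Sᵀ = S := by
  rw [← conjTranspose_eq_transpose_of_trivial, hS.isHermitian.eq]

variable {k n : Type*} [Fintype k] [Fintype n] [DecidableEq n] {P : Matrix k n ℝ}
  {S : Matrix n n ℝ}

theorem l2_opNorm_inv_le_one_of_mul_self_eq (hS : S.PosDef) (hSsq : S * S = 1 + Pᵀ * P) :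
    ‖S⁻¹‖ ≤ 1 := by
  refine l2_opNorm_inv_le_one_of_posSemidef_transpose_mul_self_sub_one hS.isUnit ?_
  rw [hS.transpose_eq, hSsq, add_sub_cancel_left, ← conjTranspose_eq_transpose_of_trivial]
  exact posSemidef_conjTranspose_mul_self P

theorem l2_opNorm_mul_inv_le_one_of_mul_self_eq (hS : S.PosDef) (hSsq : S * S = 1 + Pᵀ * P) :
    ‖P * S⁻¹‖ ≤ 1 := by
  apply l2_opNorm_le_one_of_posSemidef_one_sub
  have hSdet : IsUnit S.det := (isUnit_iff_isUnit_det S).mp hS.isUnit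
  have hPP : Pᵀ * P = S * S - 1 := by rw [hSsq, add_sub_cancel_left]
  have hgram : 1 - (P * S⁻¹)ᵀ * (P * S⁻¹) = (S⁻¹)ᴴ * S⁻¹ := by
    rw [conjTranspose_eq_transpose_of_trivial, transpose_mul, transpose_nonsing_inv,
      hS.transpose_eq, Matrix.mul_assoc, ← Matrix.mul_assoc Pᵀ, hPP, Matrix.sub_mul,
      Matrix.mul_sub, Matrix.mul_assoc, mul_nonsing_inv S hSdet, Matrix.mul_one,
      Matrix.one_mul, nonsing_inv_mul S hSdet]
    abel
  rw [hgram]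
  exact posSemidef_conjTranspose_mul_self _

theorem one_sub_inv_eq_of_mul_self_eq (hS : S.PosDef) (hSsq : S * S = 1 + Pᵀ * P) :
    1 - S⁻¹ = (P * S⁻¹)ᵀ * (P * (S + 1)⁻¹) := by
  have hSdet : IsUnit S.det := (isUnit_iff_isUnit_det S).mp hS.isUnit
  have hS1det : IsUnit (S + 1).det :=
    (isUnit_iff_isUnit_det _).mp (PosDef.add_posSemidef hS PosSemidef.one).isUnit
  have hPP : Pᵀ * P = (S - 1) * (S + 1) := by
    rw [← add_sub_cancel_left 1 (Pᵀ * P), ← hSsq]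
    noncomm_ring
  rw [transpose_mul, transpose_nonsing_inv, hS.transpose_eq, Matrix.mul_assoc,
    ← Matrix.mul_assoc Pᵀ, hPP, Matrix.mul_assoc, mul_nonsing_inv _ hS1det, Matrix.mul_one,
    Matrix.mul_sub, nonsing_inv_mul _ hSdet, Matrix.mul_one]

theorem l2_opNorm_one_sub_inv_le_of_mul_self_eq [DecidableEq k] (hS : S.PosDef)
    (hSsq : S * S = 1 + Pᵀ * P) : ‖1 - S⁻¹‖ ≤ ‖P‖ := by
  rw [one_sub_inv_eq_of_mul_self_eq hS hSsq]
  calc ‖(P * S⁻¹)ᵀ * (P * (S + 1)⁻¹)‖ ≤ ‖P * S⁻¹‖ * (‖P‖ * ‖(S + 1)⁻¹‖) := by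
        refine (l2_opNorm_mul _ _).trans ?_
        rw [l2_opNorm_transpose]
        gcongr
        exact l2_opNorm_mul _ _
    _ ≤ 1 * (‖P‖ * 1) := by
        gcongr
        · exact hS.l2_opNorm_mul_inv_le_one_of_mul_self_eq hSsq
        · exact l2_opNorm_inv_add_one_le_one hS.posSemidef
    _ = ‖P‖ := by ring

end Matrix.PosDef

theorem hatQ_one_specNorm_dist_le_two_specNorm_P_general
    {s r t : ℕ}
    (Q₁ : Matrix (Fin s) (Fin r) ℝ) (Q₂ : Matrix (Fin s) (Fin t) ℝ)
    (P : Matrix (Fin t) (Fin r) ℝ)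
    (hQ1 : Q₁ᵀ * Q₁ = 1) (hQ2 : Q₂ᵀ * Q₂ = 1)
    (S : Matrix (Fin r) (Fin r) ℝ) (hS : S.PosDef)
    (hSsq : S * S = 1 + Pᵀ * P) :
    specNorm ((Q₁ + Q₂ * P) * S⁻¹ - Q₁) ≤ 2 * specNorm P := by
  have hsplit : (Q₁ + Q₂ * P) * S⁻¹ - Q₁ = Q₂ * (P * S⁻¹) - Q₁ * (1 - S⁻¹) := by
    rw [Matrix.add_mul, Matrix.mul_sub, Matrix.mul_one, Matrix.mul_assoc]
    abel
  rw [specNorm_eq_l2_opNorm, specNorm_eq_l2_opNorm, hsplit]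
  calc ‖Q₂ * (P * S⁻¹) - Q₁ * (1 - S⁻¹)‖ ≤ ‖Q₂‖ * (‖P‖ * ‖S⁻¹‖) + ‖Q₁‖ * ‖1 - S⁻¹‖ := by
        refine (norm_sub_le _ _).trans (add_le_add ?_ (l2_opNorm_mul _ _))
        exact (l2_opNorm_mul _ _).trans (by gcongr; exact l2_opNorm_mul _ _)
    _ ≤ 1 * (‖P‖ * 1) + 1 * ‖P‖ := by
        gcongr
        · exact l2_opNorm_le_one_of_transpose_mul_self_eq_one hQ2
        · exact hS.l2_opNorm_inv_le_one_of_mul_self_eq hSsq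
        · exact l2_opNorm_le_one_of_transpose_mul_self_eq_one hQ1
        · exact hS.l2_opNorm_one_sub_inv_le_of_mul_self_eq hSsq
    _ = 2 * ‖P‖ := by ring

/-- With `Q = (Q₁, Q₂)` orthogonal and `S` the symmetric positive
definite square root of `I + PᵀP`, the matrix `Q̂₁ = (Q₁ + Q₂P) S⁻¹` satisfies
`‖Q̂₁ - Q₁‖₂ ≤ 2‖P‖₂`. -/
theorem hatQ_one_specNorm_dist_le_two_specNorm_P
    {s r t : ℕ}
    (Q₁ : Matrix (Fin s) (Fin r) ℝ) (Q₂ : Matrix (Fin s) (Fin t) ℝ)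
    (P : Matrix (Fin t) (Fin r) ℝ)
    (hQ1 : Q₁ᵀ * Q₁ = 1) (hQ2 : Q₂ᵀ * Q₂ = 1) (hQ12 : Q₁ᵀ * Q₂ = 0)
    (hQfull : Q₁ * Q₁ᵀ + Q₂ * Q₂ᵀ = 1)
    (S : Matrix (Fin r) (Fin r) ℝ) (hS : S.PosDef)
    (hSsq : S * S = 1 + Pᵀ * P) :
    specNorm ((Q₁ + Q₂ * P) * S⁻¹ - Q₁) ≤ 2 * specNorm P :=
  hatQ_one_specNorm_dist_le_two_specNorm_P_general Q₁ Q₂ P hQ1 hQ2 S hS hSsq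
end
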